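/- Let U = {z_1,…,z_n} be a universe, let S_1,…,S_t be nonempty subsets of U, and let k be a positive integer with k ≤ n. Fix the candidate set C = {x_1,…,x_t, y}. Let G_1,…,G_n be profiles over C such that for each i ∈ [n] and j ∈ [t]: D_{G_i}(y, x_j) = 2 if z_i ∈ S_j and D_{G_i}(y, x_j) = 0 otherwise, and D_{G_i}(x_j, x_ℓ) = 0 for all distinct j, ℓ ∈ [t] (such profiles exist). Then the Optimal Attack instance (C, {G_1,…,G_n}, k_a = n, k_d = k) for the Condorcet voting rule is a Yes instance if and only if there is NO subset W ⊆ U with |W| = k and W ∩ S_j ≠ ∅ for every j ∈ [t]. -/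

import Mathlib

open Finset

/-- A vote over a candidate set `C` with `m` candidates: a ranking assigning each
candidate its position. -/
abbrev Vote (C : Type*) (m : ℕ) := C ≃ Fin m

/-- The score of candidate `x` in profile `P` under score vector `α`. -/
def score {C : Type*} {m : ℕ} (α : Fin m → ℝ) (P : Multiset (Vote C m)) (x : C) : ℝ :=
  (P.map fun v => α (v x)).sum

/-- The scoring rule of `α`: the set of candidates with maximum score. -/
def scoringRule {C : Type*} {m : ℕ} (α : Fin m → ℝ) (P : Multiset (Vote C m)) : Set C :=
  {x | ∀ y, score α P y ≤ score α P x}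

/-- `margin P x y`: number of votes preferring `x` to `y` minus those preferring `y` to `x`. -/
def margin {C : Type*} {m : ℕ} (P : Multiset (Vote C m)) (x y : C) : ℤ :=
  ((P.filter fun v => v x < v y).card : ℤ) - ((P.filter fun v => v y < v x).card : ℤ)

/-- `c` is the Condorcet winner of `P`. -/
def CondorcetWinner {C : Type*} {m : ℕ} (P : Multiset (Vote C m)) (c : C) : Prop :=
  ∀ y, y ≠ c → 0 < margin P c y

/-- The Condorcet voting rule: `{c}` if a Condorcet winner `c` exists, all candidates otherwise. -/
def condorcetRule {C : Type*} {m : ℕ} (P : Multiset (Vote C m)) : Set C :=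
  {x | CondorcetWinner P x ∨ ¬ ∃ c, CondorcetWinner P c}

/-- `α` is monotone nonincreasing (part of being a score vector). -/
def IsMonotoneScore {m : ℕ} (α : Fin m → ℝ) : Prop :=
  ∀ i j : Fin m, i ≤ j → α j ≤ α i

/-- `α` is normalized: some consecutive difference is `1` and all later entries are `0`. -/
def IsNormalized {m : ℕ} (α : Fin m → ℝ) : Prop :=
  ∃ j : ℕ, ∃ hj : j + 1 < m, α ⟨j, Nat.lt_of_succ_lt hj⟩ - α ⟨j + 1, hj⟩ = 1 ∧
    ∀ ℓ : Fin m, j < (ℓ : ℕ) → α ℓ = 0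

/-- `Q` is a profile `P_u^v`: it has `m` votes and
`s_Q(u) + 1 = s_Q(v) - 1 = s_Q(z)` for every `z ∉ {u, v}`. -/
def PfGood {C : Type*} {m : ℕ} (α : Fin m → ℝ) (Q : Multiset (Vote C m)) (u v : C) : Prop :=
  Multiset.card Q = m ∧ score α Q u + 1 = score α Q v - 1 ∧
    ∀ z : C, z ≠ u → z ≠ v → score α Q z = score α Q v - 1

/-- The Optimal Defense instance with groups `G`, attacker resource `ka` and defender
resource `kd` is a Yes instance for voting rule `r`. -/
def DefenseYes {C : Type*} {m N : ℕ} (r : Multiset (Vote C m) → Set C)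
    (G : Fin N → Multiset (Vote C m)) (ka kd : ℕ) : Prop :=
  ∃ I : Finset (Fin N), I.card ≤ kd ∧
    ∀ I' : Finset (Fin N), Disjoint I I' → I'.card ≤ ka →
      r (∑ i ∈ Finset.univ \ I', G i) = r (∑ i, G i)

/-- The Optimal Attack instance with groups `G`, attacker resource `ka` and defender
resource `kd` is a Yes instance for voting rule `r`. -/
def AttackYes {C : Type*} {m N : ℕ} (r : Multiset (Vote C m) → Set C)
    (G : Fin N → Multiset (Vote C m)) (ka kd : ℕ) : Prop :=
  ∃ I : Finset (Fin N), I.card ≤ ka ∧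
    ∀ I' : Finset (Fin N), I'.card ≤ kd →
      r (∑ i ∈ Finset.univ \ (I \ I'), G i) ≠ r (∑ i, G i)

/-!
The profile of a set `R` of groups has margin `D(y, x_j) = 2·|R ∩ S_j|`. Hence `y` is the
Condorcet winner of `R` exactly when `R` hits every `S_j`; otherwise no candidate is a Condorcet
winner and the rule returns all candidates. The full profile elects `y`, so the attacker (who may
delete every group) wins iff every restorable set `I'` of at most `k` groups misses some `S_j`,
i.e. iff there is no hitting set of size `k`.
-/

section Margin

variable {C : Type*} {m : ℕ}

lemma margin_add (P Q : Multiset (Vote C m)) (a b : C) :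
    margin (P + Q) a b = margin P a b + margin Q a b := by
  simp only [margin, Multiset.filter_add, Multiset.card_add, Nat.cast_add]
  ring

lemma margin_zero (a b : C) : margin (0 : Multiset (Vote C m)) a b = 0 := by
  simp [margin]

lemma margin_swap (P : Multiset (Vote C m)) (a b : C) : margin P b a = -margin P a b := by
  simp only [margin, neg_sub]

def marginAddMonoidHom (a b : C) : Multiset (Vote C m) →+ ℤ where
  toFun P := margin P a b
  map_zero' := margin_zero a b
  map_add' P Q := margin_add P Q a b

lemma margin_sum {ι : Type*} (s : Finset ι) (G : ι → Multiset (Vote C m)) (a b : C) :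
    margin (∑ i ∈ s, G i) a b = ∑ i ∈ s, margin (G i) a b :=
  map_sum (marginAddMonoidHom a b) G s

end Margin

section Condorcet

variable {C : Type*} {m : ℕ} {P : Multiset (Vote C m)}

lemma CondorcetWinner.eq {c d : C} (hc : CondorcetWinner P c) (hd : CondorcetWinner P d) :
    c = d := by
  by_contra hcd
  have h₁ := hc d (Ne.symm hcd)
  have h₂ := hd c hcd
  rw [margin_swap] at h₂
  omega

lemma condorcetRule_eq_singleton {c : C} (hc : CondorcetWinner P c) :
    condorcetRule P = {c} := by
  ext d
  simp only [condorcetRule, Set.mem_ofPred_eq, Set.mem_singleton_iff]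
  exact ⟨fun h => h.elim (fun hd => hd.eq hc) fun h => (h ⟨c, hc⟩).elim,
    fun hd => Or.inl (hd ▸ hc)⟩

lemma condorcetRule_eq_univ (h : ¬∃ c, CondorcetWinner P c) : condorcetRule P = Set.univ := by
  ext d
  simp [condorcetRule, h]

end Condorcet

lemma exists_apply_eq_of_ne_of_card_eq_succ {ι C : Type*} [Fintype ι] [Fintype C] {x : ι → C}
    (hx : Function.Injective x) {y : C} (hxy : ∀ i, x i ≠ y)
    (hC : Fintype.card C = Fintype.card ι + 1) {z : C} (hz : z ≠ y) : ∃ i, x i = z := by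
  classical
  have hy : y ∉ univ.image x := by simpa using hxy
  have hcover : insert y (univ.image x) = univ := by
    refine eq_univ_of_card _ ?_
    rw [card_insert_of_notMem hy, card_image_of_injective _ hx, card_univ, hC]
  have hz' : z ∈ insert y (univ.image x) := hcover ▸ mem_univ z
  simpa [hz] using hz'

def IsHittingSet {α ι : Type*} [DecidableEq α] (W : Finset α) (S : ι → Finset α) : Prop :=
  ∀ j, (W ∩ S j).Nonempty

lemma IsHittingSet.mono {α ι : Type*} [DecidableEq α] {W W' : Finset α} {S : ι → Finset α}
    (hW : IsHittingSet W S) (h : W ⊆ W') : IsHittingSet W' S :=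
  fun j => (hW j).mono (inter_subset_inter_right h)

section HittingSetReduction

variable {n t m : ℕ} {S : Fin t → Finset (Fin n)} {C : Type*} {x : Fin t → C} {y : C}
  {G : Fin n → Multiset (Vote C m)}

lemma margin_sum_eq_two_mul_card
    (hGyx : ∀ i j, margin (G i) y (x j) = if i ∈ S j then 2 else 0)
    (R : Finset (Fin n)) (j : Fin t) :
    margin (∑ i ∈ R, G i) y (x j) = 2 * #(R ∩ S j) := by
  rw [margin_sum, sum_congr rfl fun i _ => hGyx i j, sum_ite_mem, sum_const, nsmul_eq_mul,
    mul_comm]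

variable (hcover : ∀ z, z ≠ y → ∃ j, x j = z)
  (hGyx : ∀ i j, margin (G i) y (x j) = if i ∈ S j then 2 else 0)
include hcover hGyx

lemma condorcetWinner_sum_of_isHittingSet {R : Finset (Fin n)} (hR : IsHittingSet R S) :
    CondorcetWinner (∑ i ∈ R, G i) y := by
  intro z hz
  obtain ⟨j, rfl⟩ := hcover z hz
  rw [margin_sum_eq_two_mul_card hGyx]
  have : 0 < #(R ∩ S j) := (hR j).card_pos
  omega

lemma not_exists_condorcetWinner_sum (hxy : ∀ j, x j ≠ y) {R : Finset (Fin n)} {j : Fin t}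
    (hj : R ∩ S j = ∅) : ¬∃ c, CondorcetWinner (∑ i ∈ R, G i) c := by
  rintro ⟨c, hc⟩
  by_cases hcy : c = y
  · subst hcy
    have := hc (x j) (hxy j)
    rw [margin_sum_eq_two_mul_card hGyx, hj, card_empty] at this
    omega
  · obtain ⟨l, rfl⟩ := hcover c hcy
    have := hc y (hxy l).symm
    rw [margin_swap, margin_sum_eq_two_mul_card hGyx] at this
    omega

lemma condorcetRule_sum_eq_singleton_iff (hxy : ∀ j, x j ≠ y) (R : Finset (Fin n)) :
    condorcetRule (∑ i ∈ R, G i) = {y} ↔ IsHittingSet R S := by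
  refine ⟨fun hy => ?_, fun hR =>
    condorcetRule_eq_singleton (condorcetWinner_sum_of_isHittingSet hcover hGyx hR)⟩
  by_contra hR
  obtain ⟨j, hj⟩ : ∃ j, R ∩ S j = ∅ := by
    simpa [IsHittingSet, not_nonempty_iff_eq_empty] using hR
  rw [condorcetRule_eq_univ (not_exists_condorcetWinner_sum hcover hGyx hxy hj)] at hy
  exact hxy j (Set.eq_of_mem_singleton (hy ▸ Set.mem_univ (x j)))

end HittingSetReduction

theorem stmt9_general (n t : ℕ) (S : Fin t → Finset (Fin n)) (hS : ∀ j, (S j).Nonempty)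
    (k : ℕ) (hkn : k ≤ n)
    {C : Type} [Fintype C] (hC : Fintype.card C = t + 1)
    (x : Fin t → C) (hxinj : Function.Injective x) (y : C) (hxy : ∀ j, x j ≠ y)
    (G : Fin n → Multiset (Vote C (t + 1)))
    (hGyx : ∀ i j, margin (G i) y (x j) = if i ∈ S j then 2 else 0) :
    AttackYes condorcetRule G n k ↔
    ¬ ∃ W : Finset (Fin n), W.card = k ∧ ∀ j, (W ∩ S j).Nonempty := by
  have hcover : ∀ z, z ≠ y → ∃ j, x j = z := fun z hz =>
    exists_apply_eq_of_ne_of_card_eq_succ hxinj hxy (by rw [hC, Fintype.card_fin]) hz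
  have hrule := condorcetRule_sum_eq_singleton_iff hcover hGyx hxy
  have hfull : condorcetRule (∑ i, G i) = {y} := (hrule univ).2 fun j => by simpa using hS j
  simp only [AttackYes, hfull, Ne, hrule]
  constructor
  · rintro ⟨I, -, hI⟩ ⟨W, hWk, hW⟩
    exact hI W hWk.le (IsHittingSet.mono (S := S) hW fun i hi => by simp [hi])
  · intro hno
    refine ⟨univ, by simp, fun I' hI' hI'hit => ?_⟩
    rw [sdiff_sdiff_right_self, inf_eq_inter, univ_inter] at hI'hit
    obtain ⟨W, hI'W, hWk⟩ := exists_superset_card_eq hI' (by simpa using hkn)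
    exact hno ⟨W, hWk, hI'hit.mono hI'W⟩

/-- the Hitting Set reduction instance for Optimal Attack under the
Condorcet voting rule. -/
theorem stmt9 (n t : ℕ) (S : Fin t → Finset (Fin n)) (hS : ∀ j, (S j).Nonempty)
    (k : ℕ) (hk : 0 < k) (hkn : k ≤ n)
    {C : Type} [Fintype C] [DecidableEq C] (hC : Fintype.card C = t + 1)
    (x : Fin t → C) (hxinj : Function.Injective x) (y : C) (hxy : ∀ j, x j ≠ y)
    (G : Fin n → Multiset (Vote C (t + 1)))
    (hGyx : ∀ i j, margin (G i) y (x j) = if i ∈ S j then 2 else 0)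
    (hGxx : ∀ i j l, j ≠ l → margin (G i) (x j) (x l) = 0) :
    AttackYes condorcetRule G n k ↔
    ¬ ∃ W : Finset (Fin n), W.card = k ∧ ∀ j, (W ∩ S j).Nonempty :=
  stmt9_general n t S hS k hkn hC x hxinj y hxy G hGyx
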